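/- arXiv:1708.07482 — 2 statements merged into one kernel-verified Lean document; each statement's English description precedes it below -/
import Mathlib

section
/- Let Φ : [0,∞) → ℝ be a Young function, i.e. Φ(t) = ∫₀ᵗ φ(s) ds where φ : [0,∞) → ℝ is right-continuous, nondecreasing, φ(0) = 0, φ(s) > 0 for s > 0, and φ(s) → ∞ as s → ∞. Then there exists a Young function Φ₁ such that Φ(x) ≤ Φ₁(x) for all x ≥ 0, and for every c > 0 the function x ↦ Φ(cx)/Φ₁(x) is bounded on (0,∞). -/
open Set Filter MeasureTheory

/-- `Φ` is a Young function generated by `φ`. -/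
def IsYoungPair (φ Φ : ℝ → ℝ) : Prop :=
  (∀ s ∈ Set.Ici (0:ℝ), ContinuousWithinAt φ (Set.Ici s) s) ∧
  MonotoneOn φ (Set.Ici 0) ∧
  φ 0 = 0 ∧
  (∀ s > (0:ℝ), 0 < φ s) ∧
  Filter.Tendsto φ Filter.atTop Filter.atTop ∧
  (∀ t ≥ (0:ℝ), Φ t = ∫ s in (0:ℝ)..t, φ s)

/-!
Take `φ₁ = φ ∘ g` with `g s = s ^ 2 + √s`. Since `g s ≥ s`, `Φ ≤ Φ₁`. For a Young function
`Φ (c x) ≤ c x φ (c x)` and `(x / 2) φ₁ (x / 2) ≤ Φ₁ x`, so `Φ (c x) ≤ 2 c Φ₁ x` whenever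
`c x ≤ g (x / 2)`. The `√s` term gives this for small `x` and the `s ^ 2` term for large `x`;
on the compact range in between, both `Φ (c x)` and `1 / Φ₁ x` are bounded by monotonicity.
-/

namespace MonotoneOn

variable {ψ : ℝ → ℝ} {a b : ℝ}

theorem intervalIntegrable_of_le (hψ : MonotoneOn ψ (Icc a b)) (hab : a ≤ b) :
    IntervalIntegrable ψ volume a b :=
  MonotoneOn.intervalIntegrable (by rwa [uIcc_of_le hab])

theorem integral_le_sub_mul (hψ : MonotoneOn ψ (Icc a b)) (hab : a ≤ b) :
    ∫ s in a..b, ψ s ≤ (b - a) * ψ b := by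
  calc ∫ s in a..b, ψ s ≤ ∫ _ in a..b, ψ b :=
        intervalIntegral.integral_mono_on hab (hψ.intervalIntegrable_of_le hab)
          intervalIntegrable_const fun s hs => hψ hs (right_mem_Icc.2 hab) hs.2
    _ = (b - a) * ψ b := by simp

theorem sub_mul_le_integral (hψ : MonotoneOn ψ (Icc a b)) (hab : a ≤ b) :
    (b - a) * ψ a ≤ ∫ s in a..b, ψ s := by
  calc (b - a) * ψ a = ∫ _ in a..b, ψ a := by simp
    _ ≤ ∫ s in a..b, ψ s :=
        intervalIntegral.integral_mono_on hab intervalIntegrable_const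
          (hψ.intervalIntegrable_of_le hab) fun s hs => hψ (left_mem_Icc.2 hab) hs hs.1

end MonotoneOn

namespace IsYoungPair

variable {φ Φ φ₁ Φ₁ : ℝ → ℝ}

theorem monotoneOn (h : IsYoungPair φ Φ) : MonotoneOn φ (Ici 0) := h.2.1

theorem eq_integral (h : IsYoungPair φ Φ) {x : ℝ} (hx : 0 ≤ x) : Φ x = ∫ s in (0:ℝ)..x, φ s :=
  h.2.2.2.2.2 x hx

theorem nonneg (h : IsYoungPair φ Φ) {s : ℝ} (hs : 0 ≤ s) : 0 ≤ φ s :=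
  h.2.2.1 ▸ h.monotoneOn self_mem_Ici hs hs

theorem monotoneOn_Icc (h : IsYoungPair φ Φ) {a b : ℝ} (ha : 0 ≤ a) :
    MonotoneOn φ (Icc a b) :=
  h.monotoneOn.mono fun _ hs => ha.trans hs.1

theorem intervalIntegrable (h : IsYoungPair φ Φ) {a b : ℝ} (ha : 0 ≤ a) (hab : a ≤ b) :
    IntervalIntegrable φ volume a b :=
  (h.monotoneOn_Icc ha).intervalIntegrable_of_le hab

theorem le_mul (h : IsYoungPair φ Φ) {x : ℝ} (hx : 0 ≤ x) : Φ x ≤ x * φ x := by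
  simpa [h.eq_integral hx] using (h.monotoneOn_Icc le_rfl).integral_le_sub_mul hx

theorem half_mul_le (h : IsYoungPair φ Φ) {x : ℝ} (hx : 0 ≤ x) : x / 2 * φ (x / 2) ≤ Φ x := by
  have hx₂ : 0 ≤ x / 2 := by linarith
  have hsplit := intervalIntegral.integral_add_adjacent_intervals
    (h.intervalIntegrable le_rfl hx₂) (h.intervalIntegrable hx₂ (b := x) (by linarith))
  have hfirst : 0 ≤ ∫ s in (0:ℝ)..x / 2, φ s :=
    intervalIntegral.integral_nonneg hx₂ fun s hs => h.nonneg hs.1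
  have hsecond := (h.monotoneOn_Icc hx₂ (b := x)).sub_mul_le_integral (by linarith)
  rw [h.eq_integral hx, ← hsplit]
  linarith

theorem pos (h : IsYoungPair φ Φ) {x : ℝ} (hx : 0 < x) : 0 < Φ x :=
  (mul_pos (half_pos hx) (h.2.2.2.1 _ (half_pos hx))).trans_le (h.half_mul_le hx.le)

theorem mono (h : IsYoungPair φ Φ) {a b : ℝ} (ha : 0 ≤ a) (hab : a ≤ b) : Φ a ≤ Φ b := by
  have hsplit := intervalIntegral.integral_add_adjacent_intervals
    (h.intervalIntegrable le_rfl ha) (h.intervalIntegrable ha hab)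
  have hrest : 0 ≤ ∫ s in a..b, φ s :=
    intervalIntegral.integral_nonneg hab fun s hs => h.nonneg (ha.trans hs.1)
  rw [h.eq_integral ha, h.eq_integral (ha.trans hab), ← hsplit]
  linarith

theorem le_of_forall_le (h : IsYoungPair φ Φ) (h₁ : IsYoungPair φ₁ Φ₁) (hle : ∀ s ≥ 0, φ s ≤ φ₁ s)
    {x : ℝ} (hx : 0 ≤ x) : Φ x ≤ Φ₁ x := by
  rw [h.eq_integral hx, h₁.eq_integral hx]
  exact intervalIntegral.integral_mono_on hx (h.intervalIntegrable le_rfl hx)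
    (h₁.intervalIntegrable le_rfl hx) fun s hs => hle s hs.1

theorem comp (h : IsYoungPair φ Φ) {g : ℝ → ℝ} (hgc : ContinuousOn g (Ici 0))
    (hgm : MonotoneOn g (Ici 0)) (hg0 : g 0 = 0) (hgpos : ∀ s > 0, 0 < g s)
    (hgtop : Tendsto g atTop atTop) :
    IsYoungPair (φ ∘ g) (fun x => ∫ s in (0:ℝ)..x, φ (g s)) := by
  obtain ⟨hcont, hmono, h0, hpos, htop, -⟩ := h
  have hg_nonneg : ∀ s ≥ 0, 0 ≤ g s := fun s hs => hg0 ▸ hgm self_mem_Ici hs hs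
  refine ⟨fun s hs => ?_, fun a ha b hb hab => hmono (hg_nonneg a ha) (hg_nonneg b hb)
    (hgm ha hb hab), by simp [hg0, h0], fun s hs => hpos _ (hgpos s hs), htop.comp hgtop,
    fun _ _ => rfl⟩
  exact (hcont _ (hg_nonneg s hs)).comp ((hgc s hs).mono (Ici_subset_Ici.2 hs))
    ((hgm.mono (Ici_subset_Ici.2 hs)).mapsTo_Ici)

theorem le_two_mul_of_le_half (h : IsYoungPair φ Φ) (h₁ : IsYoungPair φ₁ Φ₁) {c x : ℝ}
    (hc : 0 ≤ c) (hx : 0 ≤ x) (hle : φ (c * x) ≤ φ₁ (x / 2)) : Φ (c * x) ≤ 2 * c * Φ₁ x := by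
  have hcx : 0 ≤ c * x := mul_nonneg hc hx
  calc Φ (c * x) ≤ c * x * φ (c * x) := h.le_mul hcx
    _ ≤ c * x * φ₁ (x / 2) := by gcongr
    _ = 2 * c * (x / 2 * φ₁ (x / 2)) := by ring
    _ ≤ 2 * c * Φ₁ x := by gcongr; exact h₁.half_mul_le hx

theorem exists_div_le (h : IsYoungPair φ Φ) (h₁ : IsYoungPair φ₁ Φ₁) {a b c : ℝ} (hc : 0 ≤ c)
    (ha : 0 < a) (hle : ∀ x > 0, x ≤ a ∨ b ≤ x → φ (c * x) ≤ φ₁ (x / 2)) :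
    ∃ M, ∀ x > 0, Φ (c * x) / Φ₁ x ≤ M := by
  refine ⟨max (2 * c) (Φ (c * b) / Φ₁ a), fun x hx => ?_⟩
  rw [div_le_iff₀ (h₁.pos hx)]
  by_cases hout : x ≤ a ∨ b ≤ x
  · calc Φ (c * x) ≤ 2 * c * Φ₁ x := h.le_two_mul_of_le_half h₁ hc hx.le (hle x hx hout)
      _ ≤ _ := by gcongr; exacts [(h₁.pos hx).le, le_max_left _ _]
  · push Not at hout
    have hΦ₁a := h₁.pos ha
    calc Φ (c * x) ≤ Φ (c * b) := h.mono (by positivity) (by gcongr; exact hout.2.le)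
      _ = Φ (c * b) / Φ₁ a * Φ₁ a := (div_mul_cancel₀ _ hΦ₁a.ne').symm
      _ ≤ max (2 * c) (Φ (c * b) / Φ₁ a) * Φ₁ x :=
        mul_le_mul (le_max_right _ _) (h₁.mono ha.le hout.1.le) hΦ₁a.le
          ((by positivity : (0:ℝ) ≤ 2 * c).trans (le_max_left _ _))

end IsYoungPair

theorem le_sq_add_sqrt {s : ℝ} (hs : 0 ≤ s) : s ≤ s ^ 2 + √s := by
  have hsq : √s ^ 2 = s := Real.sq_sqrt hs
  nlinarith [mul_nonneg (Real.sqrt_nonneg s) (sq_nonneg (√s - 1))]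

theorem monotoneOn_sq_add_sqrt : MonotoneOn (fun s : ℝ => s ^ 2 + √s) (Ici 0) :=
  fun _ ha _ _ hab => add_le_add (pow_le_pow_left₀ ha hab 2) (Real.sqrt_le_sqrt hab)

theorem mul_le_sq_add_sqrt_half {c x : ℝ} (hc : 0 < c) (hx : 0 < x)
    (hout : x ≤ 1 / (2 * c ^ 2) ∨ 4 * c ≤ x) : c * x ≤ (x / 2) ^ 2 + √(x / 2) := by
  rcases hout with hsmall | hlarge
  · have hcx : c * x ≤ √(x / 2) := by
      rw [Real.le_sqrt (by positivity) (by positivity)]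
      rw [le_div_iff₀ (by positivity)] at hsmall
      nlinarith
    nlinarith [sq_nonneg (x / 2)]
  · nlinarith [Real.sqrt_nonneg (x / 2)]

theorem stmt0 (φ Φ : ℝ → ℝ) (hY : IsYoungPair φ Φ) :
    ∃ φ₁ Φ₁ : ℝ → ℝ, IsYoungPair φ₁ Φ₁ ∧
      (∀ x ≥ (0:ℝ), Φ x ≤ Φ₁ x) ∧
      (∀ c > (0:ℝ), ∃ M : ℝ, ∀ x > (0:ℝ), Φ (c * x) / Φ₁ x ≤ M) := by
  set g : ℝ → ℝ := fun s => s ^ 2 + √s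
  have hY₁ : IsYoungPair (φ ∘ g) (fun x => ∫ s in (0:ℝ)..x, φ (g s)) :=
    hY.comp (by fun_prop) monotoneOn_sq_add_sqrt (by simp [g])
      (fun s hs => hs.trans_le (le_sq_add_sqrt hs.le))
      (tendsto_atTop_mono' _ (eventually_ge_atTop 0 |>.mono fun _ => le_sq_add_sqrt) tendsto_id)
  refine ⟨_, _, hY₁, fun x hx => hY.le_of_forall_le hY₁ (fun s hs => ?_) hx, fun c hc => ?_⟩
  · exact hY.monotoneOn hs (hs.trans (le_sq_add_sqrt hs)) (le_sq_add_sqrt hs)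
  · exact hY.exists_div_le hY₁ hc.le (a := 1 / (2 * c ^ 2)) (b := 4 * c) (by positivity)
      fun x hx hout => hY.monotoneOn (mem_Ici.2 (by positivity)) (mem_Ici.2 (by positivity))
        (mul_le_sq_add_sqrt_half hc hx hout)
end

section
/- There is no constant C > 0 with the following property: for every t > 0 and every bounded Bochner-measurable u : (0,t) → L¹(0,∞), ‖∫₀ᵗ T(s)u(s) ds‖_{L¹} ≤ C·sup_{s∈(0,t)}‖u(s)‖_{L¹}, where (T(t)) is the left-translation semigroup on L¹(0,∞). That is, the system ẋ = Ax + u with A the generator of left translation on L¹(0,∞) and B = I is not infinite-time admissible with respect to L^∞. -/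
/-!
Take `u(s) = 𝟙_(s, s+1]` for `s ∈ (0, t]`. Every `u(s)` has `L¹` norm `1`, but translating it back
by `s` aligns all of them on `(0, 1]`: `T(s)u(s) = 𝟙_(0,1]`. Hence `∫₀ᵗ T(s)u(s) ds = t · 𝟙_(0,1]`
has norm `t`, and no constant `C` can dominate every `t`.
-/

open Set MeasureTheory

noncomputable def unitBump (s : ℝ) : ℝ → ℝ := (Ioc s (s + 1)).indicator fun _ => 1

lemma unitBump_apply_add (s r : ℝ) : unitBump s (s + r) = (Ioc 0 1).indicator (fun _ => 1) r := by
  simp only [unitBump, indicator_apply, mem_Ioc, lt_add_iff_pos_right, add_le_add_iff_left]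

lemma measurable_uncurry_unitBump : Measurable (Function.uncurry unitBump) := by
  have hset : MeasurableSet {p : ℝ × ℝ | p.1 < p.2 ∧ p.2 ≤ p.1 + 1} :=
    (measurableSet_lt measurable_fst measurable_snd).inter
      (measurableSet_le measurable_snd (measurable_fst.add_const 1))
  exact measurable_const.indicator hset

lemma integrable_unitBump (s : ℝ) : Integrable (unitBump s) :=
  (integrable_indicator_iff measurableSet_Ioc).2 (integrableOn_const measure_Ioc_lt_top.ne)

lemma integral_Ioi_abs_unitBump {s : ℝ} (hs : 0 ≤ s) : ∫ r in Ioi 0, |unitBump s r| = 1 := by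
  have habs : (fun r => |unitBump s r|) = unitBump s := by
    funext r; exact abs_of_nonneg (indicator_nonneg (fun _ _ => zero_le_one) r)
  have hsub : Ioi (0:ℝ) ∩ Ioc s (s + 1) = Ioc s (s + 1) :=
    inter_eq_self_of_subset_right fun r hr => hs.trans_lt hr.1
  rw [habs, unitBump, setIntegral_indicator measurableSet_Ioc, hsub]
  simp

lemma integrableOn_unitBump_translate (t : ℝ) :
    IntegrableOn (fun p : ℝ × ℝ => unitBump p.1 (p.1 + p.2)) (Ioc 0 t ×ˢ Ioi 0) := by
  simp only [unitBump_apply_add]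
  rw [IntegrableOn, Measure.volume_eq_prod, ← Measure.prod_restrict]
  simpa using (integrable_const (1 : ℝ) (μ := volume.restrict (Ioc 0 t))).mul_prod
    ((integrable_indicator_iff measurableSet_Ioc).2
      (integrableOn_const (C := (1:ℝ)) measure_Ioc_lt_top.ne)).integrableOn

lemma integral_Ioi_abs_integral_unitBump_translate {t : ℝ} (ht : 0 ≤ t) :
    ∫ r in Ioi 0, |∫ s in Ioc 0 t, unitBump s (s + r)| = t := by
  have hinner : (fun r => |∫ s in Ioc 0 t, unitBump s (s + r)|) =
      (Ioc (0:ℝ) 1).indicator fun _ => t := by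
    funext r
    simp only [unitBump_apply_add, setIntegral_const, Real.volume_real_Ioc_of_le ht, sub_zero,
      smul_eq_mul]
    by_cases hr : r ∈ Ioc (0:ℝ) 1 <;> simp [hr, abs_of_nonneg ht]
  have hsub : Ioi (0:ℝ) ∩ Ioc 0 1 = Ioc 0 1 := inter_eq_self_of_subset_right Ioc_subset_Ioi_self
  rw [hinner, setIntegral_indicator measurableSet_Ioc, hsub]
  simp

/-- The left-translation semigroup on L¹(0,∞) with B = I is not infinite-time
admissible with respect to L^∞: there is no uniform-in-time constant C bounding
‖∫₀ᵗ T(s)u(s) ds‖_{L¹} by C·sup_{s∈(0,t)}‖u(s)‖_{L¹}. Here (T(s)u(s))(r) = u(s)(s+r). -/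
theorem stmt14 :
    ¬ ∃ C > (0:ℝ), ∀ t > (0:ℝ), ∀ u : ℝ → ℝ → ℝ,
      Measurable (Function.uncurry u) →
      (∀ s ∈ Set.Ioc (0:ℝ) t, MeasureTheory.IntegrableOn (u s) (Set.Ioi 0)) →
      MeasureTheory.IntegrableOn (fun p : ℝ × ℝ => u p.1 (p.1 + p.2))
        ((Set.Ioc (0:ℝ) t) ×ˢ (Set.Ioi (0:ℝ))) →
      ∀ M : ℝ, (∀ s ∈ Set.Ioc (0:ℝ) t, ∫ r in Set.Ioi (0:ℝ), |u s r| ≤ M) →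
      ∫ r in Set.Ioi (0:ℝ), |∫ s in Set.Ioc (0:ℝ) t, u s (s + r)| ≤ C * M := by
  rintro ⟨C, hC, hadmissible⟩
  have hbound := hadmissible (C + 1) (by positivity) unitBump measurable_uncurry_unitBump
    (fun s _ => (integrable_unitBump s).integrableOn) (integrableOn_unitBump_translate _) 1
    (fun s hs => (integral_Ioi_abs_unitBump hs.1.le).le)
  rw [integral_Ioi_abs_integral_unitBump_translate (by positivity), mul_one] at hbound
  linarith
end
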